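/- If $\Phi$ and $\Theta$ are creation-incoherent quantum channels, then $\Phi\otimes\Theta$ is creation-incoherent. -/

import Mathlib

open Matrix
open scoped ComplexOrder

noncomputable def deph {ι : Type} [Fintype ι] [DecidableEq ι] :
    Matrix ι ι ℂ →ₗ[ℂ] Matrix ι ι ℂ where
  toFun ρ := Matrix.diagonal fun i => ρ i i
  map_add' ρ σ := by
    ext i j
    by_cases h : i = j <;> simp [Matrix.diagonal_apply, h]
  map_smul' c ρ := by
    ext i j
    by_cases h : i = j <;> simp [Matrix.diagonal_apply, h]

def IsKrausChannel {ι κ : Type} [Fintype ι] [DecidableEq ι] [Fintype κ] [DecidableEq κ]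
    (Φ : Matrix ι ι ℂ →ₗ[ℂ] Matrix κ κ ℂ) : Prop :=
  ∃ (N : ℕ) (K : Fin N → Matrix κ ι ℂ),
    (∀ ρ, Φ ρ = ∑ n, K n * ρ * (K n)ᴴ) ∧ (∑ n, (K n)ᴴ * K n = 1)

/-- Creation-incoherent: `Φ ∘ Δ = Δ ∘ Φ ∘ Δ`. -/
def IsCI {ι κ : Type} [Fintype ι] [DecidableEq ι] [Fintype κ] [DecidableEq κ]
    (Φ : Matrix ι ι ℂ →ₗ[ℂ] Matrix κ κ ℂ) : Prop :=
  LinearMap.comp Φ deph = LinearMap.comp deph (LinearMap.comp Φ deph)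

/-- Tensor product of linear maps on matrix spaces (Kronecker form). -/
noncomputable def tensorLinMap {ι₁ ι₂ κ₁ κ₂ : Type}
    [Fintype ι₁] [DecidableEq ι₁] [Fintype ι₂] [DecidableEq ι₂]
    [Fintype κ₁] [DecidableEq κ₁] [Fintype κ₂] [DecidableEq κ₂]
    (Φ : Matrix ι₁ ι₁ ℂ →ₗ[ℂ] Matrix κ₁ κ₁ ℂ)
    (Ψ : Matrix ι₂ ι₂ ℂ →ₗ[ℂ] Matrix κ₂ κ₂ ℂ) :
    Matrix (ι₁ × ι₂) (ι₁ × ι₂) ℂ →ₗ[ℂ] Matrix (κ₁ × κ₂) (κ₁ × κ₂) ℂ where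
  toFun ρ := Matrix.of fun p q =>
    ∑ i, ∑ j, ∑ k, ∑ l, ρ (i, k) (j, l) *
      (Φ (Matrix.single i j 1) p.1 q.1 * Ψ (Matrix.single k l 1) p.2 q.2)
  map_add' ρ σ := by
    ext p q
    simp [Matrix.add_apply, add_mul, Finset.sum_add_distrib]
  map_smul' c ρ := by
    ext p q
    simp [Matrix.smul_apply, smul_eq_mul, Finset.mul_sum, mul_assoc]

section CreationIncoherent

variable {ι κ : Type} [Fintype ι] [DecidableEq ι] [Fintype κ] [DecidableEq κ]

theorem deph_apply (ρ : Matrix ι ι ℂ) : deph ρ = diagonal fun i => ρ i i := rfl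

theorem deph_single_self (i : ι) : deph (single i i (1 : ℂ)) = single i i 1 := by
  ext j k
  by_cases h : j = k
  · subst h; simp [deph_apply]
  · simp [deph_apply, single_apply, h]
    rintro rfl; exact h

theorem isCI_iff_apply_deph_offDiag (Φ : Matrix ι ι ℂ →ₗ[ℂ] Matrix κ κ ℂ) :
    IsCI Φ ↔ ∀ ρ p q, p ≠ q → Φ (deph ρ) p q = 0 := by
  constructor
  · intro hΦ ρ p q hpq
    rw [← LinearMap.comp_apply, hΦ, LinearMap.comp_apply, deph_apply, diagonal_apply_ne _ hpq]
  · intro h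
    refine LinearMap.ext fun ρ => Matrix.ext fun p q => ?_
    rcases eq_or_ne p q with rfl | hpq
    · simp [deph_apply]
    · simp only [LinearMap.comp_apply]
      rw [h ρ p q hpq, deph_apply (Φ (deph ρ)), diagonal_apply_ne _ hpq]

theorem IsCI.apply_single_self_offDiag {Φ : Matrix ι ι ℂ →ₗ[ℂ] Matrix κ κ ℂ} (hΦ : IsCI Φ)
    (i : ι) {p q : κ} (hpq : p ≠ q) : Φ (single i i 1) p q = 0 := by
  rw [← deph_single_self]
  exact (isCI_iff_apply_deph_offDiag Φ).1 hΦ _ p q hpq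

end CreationIncoherent

section TensorProduct

variable {ι₁ ι₂ κ₁ κ₂ : Type} [Fintype ι₁] [DecidableEq ι₁] [Fintype ι₂] [DecidableEq ι₂]
  [Fintype κ₁] [DecidableEq κ₁] [Fintype κ₂] [DecidableEq κ₂]
  {Φ : Matrix ι₁ ι₁ ℂ →ₗ[ℂ] Matrix κ₁ κ₁ ℂ} {Ψ : Matrix ι₂ ι₂ ℂ →ₗ[ℂ] Matrix κ₂ κ₂ ℂ}

theorem tensorLinMap_deph_apply (ρ : Matrix (ι₁ × ι₂) (ι₁ × ι₂) ℂ) (p q : κ₁ × κ₂) :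
    tensorLinMap Φ Ψ (deph ρ) p q = ∑ i, ∑ k, ρ (i, k) (i, k) *
      (Φ (single i i 1) p.1 q.1 * Ψ (single k k 1) p.2 q.2) := by
  simp [tensorLinMap, deph_apply, diagonal_apply, ite_and]

theorem IsCI.tensorLinMap (hΦ : IsCI Φ) (hΨ : IsCI Ψ) : IsCI (tensorLinMap Φ Ψ) := by
  refine (isCI_iff_apply_deph_offDiag _).2 fun ρ p q hpq => ?_
  rw [tensorLinMap_deph_apply]
  refine Finset.sum_eq_zero fun i _ => Finset.sum_eq_zero fun k _ => ?_
  rcases not_and_or.mp (Prod.ext_iff.not.mp hpq) with h₁ | h₂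
  · rw [hΦ.apply_single_self_offDiag i h₁]; ring
  · rw [hΨ.apply_single_self_offDiag k h₂]; ring

end TensorProduct

theorem stmt4_general {a b c d : ℕ}
    (Φ : Matrix (Fin a) (Fin a) ℂ →ₗ[ℂ] Matrix (Fin b) (Fin b) ℂ)
    (Θ : Matrix (Fin c) (Fin c) ℂ →ₗ[ℂ] Matrix (Fin d) (Fin d) ℂ)
    (hΦ : IsCI Φ) (hΘ : IsCI Θ) :
    IsCI (tensorLinMap Φ Θ) :=
  hΦ.tensorLinMap hΘ

theorem stmt4 {a b c d : ℕ}
    (Φ : Matrix (Fin a) (Fin a) ℂ →ₗ[ℂ] Matrix (Fin b) (Fin b) ℂ)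
    (Θ : Matrix (Fin c) (Fin c) ℂ →ₗ[ℂ] Matrix (Fin d) (Fin d) ℂ)
    (hΦc : IsKrausChannel Φ) (hΘc : IsKrausChannel Θ)
    (hΦ : IsCI Φ) (hΘ : IsCI Θ) :
    IsCI (tensorLinMap Φ Θ) :=
  stmt4_general Φ Θ hΦ hΘ
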